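/- Let (B, ρ, P) be smooth maps on [0,T] × ℝ^d, ℤ^d-periodic in space, with ρ > 0, solving the Eulerian heat equation: ∂_t B + ∇·( (B⊗P − P⊗B)/ρ ) = 0, ∇·B = 0, ∂_t ρ + ∇·P = 0, P = ∇·( B⊗B/ρ ). Then the rescaled fields b = B/ρ and v = P/ρ satisfy the non-conservative system ∂_t b + (v·∇)b = (b·∇)v and v = (b·∇)b pointwise on [0,T] × ℝ^d. -/

import Mathlib

/-!
Write `b = B/ρ` and `v = P/ρ`. Since `B^i B^j/ρ = b^i B^j` and `∇·B = 0`, the product rule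
`∇·(f V) = f ∇·V + V·∇f` gives `P^i = B·∇b^i`, i.e. `v = (b·∇)b`. Likewise the induction flux is
`b^i P − v^i B`, whose divergence is `b^i ∇·P + P·∇b^i − B·∇v^i`, while
`∂_t B^i = ∂_t(ρ b^i) = −(∇·P) b^i + ρ ∂_t b^i` by the continuity equation. The terms `b^i ∇·P`
cancel, and dividing the induction equation by `ρ` leaves `∂_t b + (v·∇)b = (b·∇)v`.
-/

open Finset

noncomputable section

/-- Spatial partial derivative `∂_j f` of a scalar function on `ℝ^d`. -/
def pd {d : ℕ} (j : Fin d) (f : (Fin d → ℝ) → ℝ) (x : Fin d → ℝ) : ℝ :=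
  fderiv ℝ f x (Pi.single j 1)

section SpatialCalculus

variable {d : ℕ} {x : Fin d → ℝ}

lemma pd_sub {j : Fin d} {f g : (Fin d → ℝ) → ℝ}
    (hf : DifferentiableAt ℝ f x) (hg : DifferentiableAt ℝ g x) :
    pd j (fun y => f y - g y) x = pd j f x - pd j g x := by
  simp only [pd, fderiv_fun_sub hf hg]
  rfl

lemma pd_mul {j : Fin d} {f g : (Fin d → ℝ) → ℝ}
    (hf : DifferentiableAt ℝ f x) (hg : DifferentiableAt ℝ g x) :
    pd j (fun y => f y * g y) x = pd j f x * g x + f x * pd j g x := by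
  simp only [pd, fderiv_fun_mul hf hg, _root_.add_apply, _root_.smul_apply, smul_eq_mul]
  ring

lemma sum_pd_mul {f : (Fin d → ℝ) → ℝ} {V : (Fin d → ℝ) → Fin d → ℝ}
    (hf : DifferentiableAt ℝ f x) (hV : DifferentiableAt ℝ V x) :
    ∑ j, pd j (fun y => f y * V y j) x
      = f x * ∑ j, pd j (fun y => V y j) x + ∑ j, V x j * pd j f x := by
  simp only [pd_mul hf (differentiableAt_pi.1 hV _), sum_add_distrib, mul_sum]
  rw [add_comm]
  exact congrArg₂ _ rfl (sum_congr rfl fun j _ => mul_comm _ _)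

lemma sum_pd_mul_div {f ρ : (Fin d → ℝ) → ℝ} {V : (Fin d → ℝ) → Fin d → ℝ}
    (hf : DifferentiableAt ℝ (fun y => f y / ρ y) x) (hV : DifferentiableAt ℝ V x) :
    ∑ j, pd j (fun y => f y * V y j / ρ y) x
      = f x / ρ x * ∑ j, pd j (fun y => V y j) x + ∑ j, V x j * pd j (fun y => f y / ρ y) x := by
  simp only [mul_div_right_comm]
  exact sum_pd_mul hf hV

lemma sum_pd_commutator_div {ρ : (Fin d → ℝ) → ℝ} {B P : (Fin d → ℝ) → Fin d → ℝ} {i : Fin d}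
    (hb : DifferentiableAt ℝ (fun y => B y i / ρ y) x)
    (hv : DifferentiableAt ℝ (fun y => P y i / ρ y) x)
    (hB : DifferentiableAt ℝ B x) (hP : DifferentiableAt ℝ P x) :
    ∑ j, pd j (fun y => (B y i * P y j - P y i * B y j) / ρ y) x
      = B x i / ρ x * ∑ j, pd j (fun y => P y j) x + ∑ j, P x j * pd j (fun y => B y i / ρ y) x
        - (P x i / ρ x * ∑ j, pd j (fun y => B y j) x
          + ∑ j, B x j * pd j (fun y => P y i / ρ y) x) := by
  simp only [sub_div, mul_div_right_comm _ _ (ρ _)]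
  rw [sum_congr rfl fun j _ => pd_sub (hb.fun_mul (differentiableAt_pi.1 hP j))
      (hv.fun_mul (differentiableAt_pi.1 hB j)), sum_sub_distrib, sum_pd_mul hb hP,
    sum_pd_mul hv hB]

end SpatialCalculus

lemma deriv_eq_deriv_mul_div_add {f g : ℝ → ℝ} {t : ℝ}
    (hf : DifferentiableAt ℝ f t) (hg : DifferentiableAt ℝ g t) (hgt : g t ≠ 0) :
    deriv f t = deriv g t * (f t / g t) + g t * deriv (fun τ => f τ / g τ) t := by
  rw [deriv_fun_div hf hg hgt]
  field_simp
  ring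

section Slices

variable {E F : Type*} [NormedAddCommGroup E] [NormedSpace ℝ E]
  [NormedAddCommGroup F] [NormedSpace ℝ F] {f : ℝ → E → F}

lemma differentiable_space_slice (hf : Differentiable ℝ (fun p : ℝ × E => f p.1 p.2)) (t : ℝ) :
    Differentiable ℝ (f t) :=
  hf.comp ((differentiable_const t).prodMk differentiable_id)

lemma differentiable_time_slice (hf : Differentiable ℝ (fun p : ℝ × E => f p.1 p.2)) (x : E) :
    Differentiable ℝ (fun τ => f τ x) :=
  hf.comp (differentiable_id.prodMk (differentiable_const x))

end Slices

theorem stmt_8_general (d : ℕ) (T : ℝ)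
    (B P : ℝ → (Fin d → ℝ) → Fin d → ℝ) (ρ : ℝ → (Fin d → ℝ) → ℝ)
    (hB : ContDiff ℝ (⊤ : ℕ∞) (fun p : ℝ × (Fin d → ℝ) => B p.1 p.2))
    (hρ : ContDiff ℝ (⊤ : ℕ∞) (fun p : ℝ × (Fin d → ℝ) => ρ p.1 p.2))
    (hP : ContDiff ℝ (⊤ : ℕ∞) (fun p : ℝ × (Fin d → ℝ) => P p.1 p.2))
    (hρpos : ∀ t x, 0 < ρ t x)
    (hind : ∀ t ∈ Set.Icc (0:ℝ) T, ∀ x, ∀ i, deriv (fun τ => B τ x i) t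
      + ∑ j, pd j (fun y => (B t y i * P t y j - P t y i * B t y j) / ρ t y) x = 0)
    (hdivB : ∀ t ∈ Set.Icc (0:ℝ) T, ∀ x, ∑ j, pd j (fun y => B t y j) x = 0)
    (hcont : ∀ t ∈ Set.Icc (0:ℝ) T, ∀ x,
      deriv (fun τ => ρ τ x) t + ∑ j, pd j (fun y => P t y j) x = 0)
    (hPdef : ∀ t ∈ Set.Icc (0:ℝ) T, ∀ x, ∀ i,
      P t x i = ∑ j, pd j (fun y => B t y i * B t y j / ρ t y) x) :
    ∀ t ∈ Set.Icc (0:ℝ) T, ∀ x, ∀ i,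
      (deriv (fun τ => B τ x i / ρ τ x) t
          + ∑ j, (P t x j / ρ t x) * pd j (fun y => B t y i / ρ t y) x
        = ∑ j, (B t x j / ρ t x) * pd j (fun y => P t y i / ρ t y) x)
      ∧ P t x i / ρ t x = ∑ j, (B t x j / ρ t x) * pd j (fun y => B t y i / ρ t y) x := by
  intro t ht x i
  have hB' := hB.differentiable (by simp)
  have hρ' := hρ.differentiable (by simp)
  have hP' := hP.differentiable (by simp)
  have hρx : ρ t x ≠ 0 := (hρpos t x).ne'
  have hBt := differentiable_space_slice hB' t x
  have hPt := differentiable_space_slice hP' t x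
  have hρt := differentiable_space_slice hρ' t x
  have hb : DifferentiableAt ℝ (fun y => B t y i / ρ t y) x := by
    fun_prop (disch := exact hρx)
  have hv : DifferentiableAt ℝ (fun y => P t y i / ρ t y) x := by
    fun_prop (disch := exact hρx)
  simp only [div_mul_eq_mul_div, ← sum_div]
  refine ⟨?_, ?_⟩
  · have hflux := sum_pd_commutator_div hb hv hBt hPt
    rw [hdivB t ht x, mul_zero, zero_add] at hflux
    have htime := deriv_eq_deriv_mul_div_add
      (differentiableAt_pi.1 (differentiable_time_slice hB' x t) i)
      (differentiable_time_slice hρ' x t) hρx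
    have hinduction := hind t ht x i
    have hcontinuity := hcont t ht x
    rw [hflux, htime] at hinduction
    field_simp
    linear_combination hinduction - B t x i / ρ t x * hcontinuity
  · rw [hPdef t ht x i, sum_pd_mul_div hb hBt, hdivB t ht x, mul_zero, zero_add]

/-- For smooth periodic solutions `(B,ρ,P)` of the Eulerian heat
equation with `ρ > 0`, the rescaled fields `b = B/ρ`, `v = P/ρ` solve the
non-conservative system `∂_t b + (v·∇)b = (b·∇)v`, `v = (b·∇)b`. -/
theorem stmt_8 (d : ℕ) (T : ℝ) (hT : 0 < T)
    (B P : ℝ → (Fin d → ℝ) → Fin d → ℝ) (ρ : ℝ → (Fin d → ℝ) → ℝ)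
    (hB : ContDiff ℝ (⊤ : ℕ∞) (fun p : ℝ × (Fin d → ℝ) => B p.1 p.2))
    (hρ : ContDiff ℝ (⊤ : ℕ∞) (fun p : ℝ × (Fin d → ℝ) => ρ p.1 p.2))
    (hP : ContDiff ℝ (⊤ : ℕ∞) (fun p : ℝ × (Fin d → ℝ) => P p.1 p.2))
    (hρpos : ∀ t x, 0 < ρ t x)
    (hBper : ∀ (t : ℝ) (x : Fin d → ℝ) (k : Fin d → ℤ), B t (x + fun i => (k i : ℝ)) = B t x)
    (hρper : ∀ (t : ℝ) (x : Fin d → ℝ) (k : Fin d → ℤ), ρ t (x + fun i => (k i : ℝ)) = ρ t x)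
    (hPper : ∀ (t : ℝ) (x : Fin d → ℝ) (k : Fin d → ℤ), P t (x + fun i => (k i : ℝ)) = P t x)
    (hind : ∀ t ∈ Set.Icc (0:ℝ) T, ∀ x, ∀ i, deriv (fun τ => B τ x i) t
      + ∑ j, pd j (fun y => (B t y i * P t y j - P t y i * B t y j) / ρ t y) x = 0)
    (hdivB : ∀ t ∈ Set.Icc (0:ℝ) T, ∀ x, ∑ j, pd j (fun y => B t y j) x = 0)
    (hcont : ∀ t ∈ Set.Icc (0:ℝ) T, ∀ x,
      deriv (fun τ => ρ τ x) t + ∑ j, pd j (fun y => P t y j) x = 0)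
    (hPdef : ∀ t ∈ Set.Icc (0:ℝ) T, ∀ x, ∀ i,
      P t x i = ∑ j, pd j (fun y => B t y i * B t y j / ρ t y) x) :
    ∀ t ∈ Set.Icc (0:ℝ) T, ∀ x, ∀ i,
      (deriv (fun τ => B τ x i / ρ τ x) t
          + ∑ j, (P t x j / ρ t x) * pd j (fun y => B t y i / ρ t y) x
        = ∑ j, (B t x j / ρ t x) * pd j (fun y => P t y i / ρ t y) x)
      ∧ P t x i / ρ t x = ∑ j, (B t x j / ρ t x) * pd j (fun y => B t y i / ρ t y) x :=
  stmt_8_general d T B P ρ hB hρ hP hρpos hind hdivB hcont hPdef
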